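/- arXiv:2001.04682 — 3 statements merged into one kernel-verified Lean document; each statement's English description precedes it below -/
import Mathlib

section
/- Under Assumption (A), for every t ≥ 0 and z ∈ ℝ the series V*(t,z) = Σ_{k≥0} 2^k log( M(t, z*(t) + 2^{−k}(z − z*(t))) ) converges absolutely, V*(t,z*(t)) = 0, and V* solves the limit problem: M(t,z) = exp( V*(t,z) − 2V*(t,z̄(t)) + V*(t,z*(t)) ) for all t ≥ 0 and z ∈ ℝ. Consequently, for arbitrary scalar functions p₀(t), q₀(t), the function U₀(t,z) = p₀(t) + q₀(t)(z − z*(t)) + V*(t,z) also satisfies M(t,z) = exp( U₀(t,z) − 2U₀(t,z̄(t)) + U₀(t,z*(t)) ). -/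
open MeasureTheory Filter

noncomputable section

/-- `j`-th partial derivative in the trait variable `z`. -/
def dz (j : ℕ) (v : ℝ → ℝ → ℝ) (t z : ℝ) : ℝ := iteratedDeriv j (v t) z

/-- Partial derivative in time. -/
def dtp (v : ℝ → ℝ → ℝ) (t z : ℝ) : ℝ := deriv (fun s => v s z) t

/-- Weight function `φ_α`. -/
def phi (zs : ℝ → ℝ) (α t z : ℝ) : ℝ := (1 + |z - zs t|) ^ α

/-- Midpoint `z̄(t)`. -/
def zbar (zs : ℝ → ℝ) (t z : ℝ) : ℝ := (z + zs t) / 2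

/-- `M(t,z) = 1 + m(z) - m(z*(t)) - m'(z*(t))(z - z*(t))`. -/
def Mf (m zs : ℝ → ℝ) (t z : ℝ) : ℝ :=
  1 + m z - m (zs t) - deriv m (zs t) * (z - zs t)

/-- `V*(t,z)`, the explicit series solution of the limit problem. -/
def Vstar (m zs : ℝ → ℝ) (t z : ℝ) : ℝ :=
  ∑' k : ℕ, (2 : ℝ) ^ k * Real.log (Mf m zs t (zs t + (2 : ℝ) ^ (-(k : ℤ)) * (z - zs t)))

/-- The quadratic form `Q`. -/
def Qf (y₁ y₂ : ℝ) : ℝ := y₁ * y₂ / 2 + 3 * (y₁ ^ 2 + y₂ ^ 2) / 4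

/-- The functional `𝓘_ε(g,W)`. -/
def Ieps (zs : ℝ → ℝ) (ε : ℝ) (g : ℝ → ℝ) (W : ℝ → ℝ → ℝ) (t z : ℝ) : ℝ :=
  (∫ y : ℝ × ℝ, Real.exp (-(Qf y.1 y.2) - ε * g t * (y.1 + y.2)
      + 2 * W t (zbar zs t z) - W t (zbar zs t z + ε * y.1) - W t (zbar zs t z + ε * y.2)))
  / (Real.sqrt Real.pi *
      ∫ y : ℝ, Real.exp (-(y ^ 2) / 2 - ε * g t * y + W t (zs t) - W t (zs t + ε * y)))

/-- Assumption (A). -/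
structure AssumptionA (m zs : ℝ → ℝ) (α a : ℝ) : Prop where
  msmooth : ContDiff ℝ 5 m
  mbddBelow : BddBelow (Set.range m)
  flow : ∀ t : ℝ, 0 ≤ t → HasDerivAt zs (-(deriv m (zs t))) t
  conv : ∃ zopt : ℝ, deriv m zopt = 0 ∧ 0 < iteratedDeriv 2 m zopt ∧
    Tendsto zs atTop (nhds zopt)
  Mpos : ∃ δ : ℝ, 0 < δ ∧ ∀ t z : ℝ, 0 ≤ t → δ ≤ Mf m zs t z
  alpha_pos : 0 < α
  alpha_lt : α < 2 - Real.log 3 / Real.log 2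
  Mdecay : ∀ k : ℕ, 1 ≤ k → k ≤ 5 → ∃ C : ℝ, ∀ t z : ℝ, 0 ≤ t →
    phi zs α t z * |dz k (Mf m zs) t z| ≤ C * Mf m zs t z
  ratio_lt : a < 1 / 2
  ratio : ∀ η : ℝ, 0 < η → ∃ Z : ℝ, ∀ t z : ℝ, 0 ≤ t → Z ≤ |z| →
    |Mf m zs t (zbar zs t z) / Mf m zs t z| ≤ a + η
  dratio : ∃ b Z : ℝ, ∀ t z : ℝ, 0 ≤ t → Z ≤ |z| →
    |dz 1 (Mf m zs) t (zbar zs t z) / dz 1 (Mf m zs) t z| ≤ b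

/-- Right-hand side of the ODE satisfied by `q*`. -/
def qodeRHS (m zs : ℝ → ℝ) (q t : ℝ) : ℝ :=
  -(iteratedDeriv 2 m (zs t)) * q + iteratedDeriv 3 m (zs t) / 2
    - 2 * iteratedDeriv 2 m (zs t) * deriv m (zs t)

/-- Membership in the space `ℰ`. -/
structure MemE (zs : ℝ → ℝ) (α : ℝ) (v : ℝ → ℝ → ℝ) : Prop where
  smooth : ∀ t : ℝ, 0 ≤ t → ContDiff ℝ 3 (v t)
  zero : ∀ t : ℝ, 0 ≤ t → v t (zs t) = 0
  dzero : ∀ t : ℝ, 0 ≤ t → dz 1 v t (zs t) = 0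
  bdd : ∃ C : ℝ, ∀ t z : ℝ, 0 ≤ t →
    |dz 1 v t z| ≤ C ∧ phi zs α t z * |dz 2 v t z| ≤ C ∧ phi zs α t z * |dz 3 v t z| ≤ C

/-- The norm of `ℰ`. -/
def normE (zs : ℝ → ℝ) (α : ℝ) (v : ℝ → ℝ → ℝ) : ℝ :=
  sSup {x : ℝ | ∃ t z : ℝ, 0 ≤ t ∧
    (x = |dz 1 v t z| ∨ x = phi zs α t z * |dz 2 v t z| ∨ x = phi zs α t z * |dz 3 v t z|)}

/-- Membership in the space `ℱ`. -/
structure MemF (zs : ℝ → ℝ) (α : ℝ) (v : ℝ → ℝ → ℝ) : Prop where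
  toMemE : MemE zs α v
  bddF : ∃ C : ℝ, ∀ t z : ℝ, 0 ≤ t →
    |2 * v t (zbar zs t z) - v t z| ≤ C ∧
    phi zs α t z * |dz 1 v t (zbar zs t z) - dz 1 v t z| ≤ C

/-- The norm of `ℱ`. -/
def normF (zs : ℝ → ℝ) (α : ℝ) (v : ℝ → ℝ → ℝ) : ℝ :=
  sSup {x : ℝ | ∃ t z : ℝ, 0 ≤ t ∧
    (x = |dz 1 v t z| ∨ x = phi zs α t z * |dz 2 v t z| ∨ x = phi zs α t z * |dz 3 v t z|
      ∨ x = |2 * v t (zbar zs t z) - v t z|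
      ∨ x = phi zs α t z * |dz 1 v t (zbar zs t z) - dz 1 v t z|)}

/-- `ℱ`-norm quantities with the time variable frozen at `t`. -/
def normFt (zs : ℝ → ℝ) (α t : ℝ) (v : ℝ → ℝ → ℝ) : ℝ :=
  sSup {x : ℝ | ∃ z : ℝ,
    (x = |dz 1 v t z| ∨ x = phi zs α t z * |dz 2 v t z| ∨ x = phi zs α t z * |dz 3 v t z|
      ∨ x = |2 * v t (zbar zs t z) - v t z|
      ∨ x = phi zs α t z * |dz 1 v t (zbar zs t z) - dz 1 v t z|)}

/-- Membership in the space `ℰ*`. -/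
structure MemEstar (zs : ℝ → ℝ) (α : ℝ) (v : ℝ → ℝ → ℝ) : Prop where
  toMemE : MemE zs α v
  smooth5 : ∀ t : ℝ, 0 ≤ t → ContDiff ℝ 5 (v t)
  bdd45 : ∃ C : ℝ, ∀ t z : ℝ, 0 ≤ t →
    phi zs α t z * |dz 4 v t z| ≤ C ∧ phi zs α t z * |dz 5 v t z| ≤ C

/-- The norm of `ℰ*`. -/
def normEstar (zs : ℝ → ℝ) (α : ℝ) (v : ℝ → ℝ → ℝ) : ℝ :=
  sSup {x : ℝ | ∃ t z : ℝ, 0 ≤ t ∧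
    (x = |dz 1 v t z| ∨ x = phi zs α t z * |dz 2 v t z| ∨ x = phi zs α t z * |dz 3 v t z|
      ∨ x = phi zs α t z * |dz 4 v t z| ∨ x = phi zs α t z * |dz 5 v t z|)}

/-- `sup_{t≥0,z} φ_α(t,z) |∂_z³ W(t,z)|`. -/
def supD3 (zs : ℝ → ℝ) (α : ℝ) (W : ℝ → ℝ → ℝ) : ℝ :=
  sSup {x : ℝ | ∃ t z : ℝ, 0 ≤ t ∧ x = phi zs α t z * |dz 3 W t z|}

/-- Unnormalized density `G*_ε`. -/
def Gstar (m zs qs : ℝ → ℝ) (ε t z : ℝ) (y : ℝ × ℝ) : ℝ :=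
  Real.exp (-(Qf y.1 y.2) - ε * qs t * (y.1 + y.2)
    + 2 * Vstar m zs t (zbar zs t z)
    - Vstar m zs t (zbar zs t z + ε * y.1) - Vstar m zs t (zbar zs t z + ε * y.2))

/-- `R*_ε(t)`. -/
def Rstar (m zs qs : ℝ → ℝ) (ε t : ℝ) : ℝ :=
  iteratedDeriv 2 m (zs t) *
    (∫ y : ℝ × ℝ, (y.1 + y.2) ^ 2 * Gstar m zs qs ε t (zs t) y) /
    (∫ y : ℝ × ℝ, Gstar m zs qs ε t (zs t) y)

/-- The perturbed system (P). -/
structure SolvesP (m zs qs : ℝ → ℝ) (α ε : ℝ) (pe κe : ℝ → ℝ) (We : ℝ → ℝ → ℝ) : Prop where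
  hp : ∀ t : ℝ, 0 < t → DifferentiableAt ℝ pe t
  hk : ∀ t : ℝ, 0 < t → DifferentiableAt ℝ κe t
  memF : MemF zs α We
  hWt : ∀ z t : ℝ, 0 < t → ∀ j : ℕ, j ≤ 3 → DifferentiableAt ℝ (fun s => dz j We s z) t
  eqn : ∀ t : ℝ, 0 < t → ∀ z : ℝ,
    Mf m zs t z
      - ε ^ 2 * (deriv pe t + deriv qs t * (z - zs t) + deriv m (zs t) * qs t
          + dtp (Vstar m zs) t z)
      - ε ^ 4 * (deriv κe t * (z - zs t) + deriv m (zs t) * κe t + dtp We t z)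
    = Mf m zs t z
        * Ieps zs ε (fun s => qs s + ε ^ 2 * κe s)
            (fun s x => Vstar m zs s x + ε ^ 2 * We s x) t z
        * Real.exp (ε ^ 2 * (We t z - 2 * We t (zbar zs t z) + We t (zs t)))

/-- Combined norm of `(κ_ε, W_ε)`. -/
def pairNormF (zs : ℝ → ℝ) (α : ℝ) (κe : ℝ → ℝ) (We : ℝ → ℝ → ℝ) : ℝ :=
  max (sSup {x : ℝ | ∃ t : ℝ, 0 ≤ t ∧ x = |κe t|}) (normF zs α We)

lemma Mf_self (m zs : ℝ → ℝ) (t : ℝ) : Mf m zs t (zs t) = 1 := by simp [Mf]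

lemma hasDerivAt_Mf {m : ℝ → ℝ} (hm : Differentiable ℝ m) (zs : ℝ → ℝ) (t z : ℝ) :
    HasDerivAt (Mf m zs t) (deriv m z - deriv m (zs t)) z := by
  have h1 : HasDerivAt m (deriv m z) z := (hm z).hasDerivAt
  have h2 : HasDerivAt (fun x : ℝ => deriv m (zs t) * (x - zs t)) (deriv m (zs t)) z := by
    simpa using ((hasDerivAt_id z).sub_const (zs t)).const_mul (deriv m (zs t))
  have h3 := ((h1.const_add 1).sub_const (m (zs t))).sub h2
  exact h3

lemma dz1_Mf {m : ℝ → ℝ} (hm : Differentiable ℝ m) (zs : ℝ → ℝ) (t z : ℝ) :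
    dz 1 (Mf m zs) t z = deriv m z - deriv m (zs t) := by
  rw [dz, iteratedDeriv_one]
  exact (hasDerivAt_Mf hm zs t z).deriv

lemma dz2_Mf {m : ℝ → ℝ} (hm : Differentiable ℝ m) (zs : ℝ → ℝ) (t z : ℝ) :
    dz 2 (Mf m zs) t z = deriv (deriv m) z := by
  rw [dz, show (2:ℕ) = 1 + 1 from rfl, iteratedDeriv_succ, iteratedDeriv_one]
  have hfun : deriv (Mf m zs t) = fun x => deriv m x - deriv m (zs t) :=
    funext fun x => (hasDerivAt_Mf hm zs t x).deriv
  rw [hfun]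
  exact deriv_sub_const _

lemma log_Mf_quadratic {m zs : ℝ → ℝ} {α : ℝ} (halpha : 0 < α)
    (hm5 : ContDiff ℝ 5 m)
    (δ C₁ C₂ : ℝ) (hδ : 0 < δ) (hM : ∀ t z : ℝ, 0 ≤ t → δ ≤ Mf m zs t z)
    (hC1 : ∀ t z : ℝ, 0 ≤ t → phi zs α t z * |dz 1 (Mf m zs) t z| ≤ C₁ * Mf m zs t z)
    (hC2 : ∀ t z : ℝ, 0 ≤ t → phi zs α t z * |dz 2 (Mf m zs) t z| ≤ C₂ * Mf m zs t z) :
    ∃ K : ℝ, 0 ≤ K ∧ ∀ t z : ℝ, 0 ≤ t → |Real.log (Mf m zs t z)| ≤ K * (z - zs t) ^ 2 := by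
  have hm : Differentiable ℝ m := hm5.differentiable (by norm_num)
  have hm2 : Differentiable ℝ (deriv m) := by
    have h4 : ContDiff ℝ 4 (deriv m) :=
      ((contDiff_succ_iff_deriv (n := 4)).mp (by exact_mod_cast hm5)).2.2
    exact h4.differentiable (by norm_num)
  have hphi : ∀ t z : ℝ, 1 ≤ phi zs α t z := fun t z =>
    Real.one_le_rpow (by simp [abs_nonneg]) halpha.le
  -- pointwise bounds
  have hb1 : ∀ t z : ℝ, 0 ≤ t → |deriv m z - deriv m (zs t)| ≤ C₁ * Mf m zs t z := by
    intro t z ht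
    have h := hC1 t z ht
    rw [dz1_Mf hm] at h
    have h2 : |deriv m z - deriv m (zs t)| ≤ phi zs α t z * |deriv m z - deriv m (zs t)| :=
      le_mul_of_one_le_left (abs_nonneg _) (hphi t z)
    linarith
  have hb2 : ∀ t z : ℝ, 0 ≤ t → |deriv (deriv m) z| ≤ C₂ * Mf m zs t z := by
    intro t z ht
    have h := hC2 t z ht
    rw [dz2_Mf hm] at h
    have h2 : |deriv (deriv m) z| ≤ phi zs α t z * |deriv (deriv m) z| :=
      le_mul_of_one_le_left (abs_nonneg _) (hphi t z)
    linarith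
  have hC1nn : 0 ≤ C₁ := by
    have h := hb1 0 (zs 0) le_rfl
    rw [Mf_self] at h
    have := abs_nonneg (deriv m (zs 0) - deriv m (zs 0))
    linarith
  have hC2nn : 0 ≤ C₂ := by
    have h := hb2 0 (zs 0) le_rfl
    rw [Mf_self] at h
    have := abs_nonneg (deriv (deriv m) (zs 0))
    linarith
  refine ⟨C₂ + C₁ ^ 2, by positivity, ?_⟩
  intro t z ht
  have hgpos : ∀ x : ℝ, 0 < Mf m zs t x := fun x => lt_of_lt_of_le hδ (hM t x ht)
  set f1 : ℝ → ℝ := fun y => (deriv m y - deriv m (zs t)) / Mf m zs t y with hf1def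
  set D : ℝ → ℝ := fun x =>
    (deriv (deriv m) x * Mf m zs t x
      - (deriv m x - deriv m (zs t)) * (deriv m x - deriv m (zs t))) / Mf m zs t x ^ 2
    with hDdef
  have hD : ∀ x : ℝ, HasDerivAt f1 (D x) x := fun x =>
    HasDerivAt.div (((hm2 x).hasDerivAt).sub_const (deriv m (zs t)))
      (hasDerivAt_Mf hm zs t x) (hgpos x).ne'
  have hDbound : ∀ x : ℝ, |D x| ≤ C₂ + C₁ ^ 2 := by
    intro x
    have hMx := hgpos x
    have h1 := hb2 t x ht
    have h2 := hb1 t x ht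
    rw [hDdef]
    rw [abs_div, abs_of_pos (pow_pos hMx 2)]
    rw [div_le_iff₀ (pow_pos hMx 2)]
    have e1 : |deriv (deriv m) x * Mf m zs t x
        - (deriv m x - deriv m (zs t)) * (deriv m x - deriv m (zs t))|
        ≤ |deriv (deriv m) x| * Mf m zs t x
          + |deriv m x - deriv m (zs t)| * |deriv m x - deriv m (zs t)| := by
      rw [sub_eq_add_neg]
      refine (abs_add_le _ _).trans ?_
      rw [abs_neg, abs_mul, abs_mul, abs_of_pos hMx]
    nlinarith [abs_nonneg (deriv m x - deriv m (zs t)), abs_nonneg (deriv (deriv m) x)]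
  have hflog : ∀ x : ℝ, HasDerivAt (fun y => Real.log (Mf m zs t y)) (f1 x) x := fun x =>
    (hasDerivAt_Mf hm zs t x).log (hgpos x).ne'
  have step1 : ∀ x : ℝ, |f1 x| ≤ (C₂ + C₁ ^ 2) * |x - zs t| := by
    intro x
    have h0 : f1 (zs t) = 0 := by simp [hf1def]
    have := Convex.norm_image_sub_le_of_norm_hasDerivWithin_le
      (f := f1) (f' := D) (s := Set.univ) (fun y _ => (hD y).hasDerivWithinAt)
      (fun y _ => by simpa [Real.norm_eq_abs] using hDbound y)
      convex_univ (Set.mem_univ (zs t)) (Set.mem_univ x)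
    simpa [h0, Real.norm_eq_abs] using this
  -- second MVT on the interval between zs t and z
  have hmem : ∀ x ∈ Set.Icc (min (zs t) z) (max (zs t) z), |x - zs t| ≤ |z - zs t| := by
    intro x hx
    rcases le_total (zs t) z with h | h
    · rw [min_eq_left h, max_eq_right h] at hx
      rw [abs_of_nonneg (by linarith [hx.1] : (0:ℝ) ≤ x - zs t),
        abs_of_nonneg (by linarith : (0:ℝ) ≤ z - zs t)]
      linarith [hx.2]
    · rw [min_eq_right h, max_eq_left h] at hx
      rw [abs_of_nonpos (by linarith [hx.2] : x - zs t ≤ 0),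
        abs_of_nonpos (by linarith : z - zs t ≤ 0)]
      linarith [hx.1]
  have hbd : ∀ x ∈ Set.Icc (min (zs t) z) (max (zs t) z),
      ‖f1 x‖ ≤ (C₂ + C₁ ^ 2) * |z - zs t| := by
    intro x hx
    rw [Real.norm_eq_abs]
    exact (step1 x).trans (mul_le_mul_of_nonneg_left (hmem x hx) (by positivity))
  have hmvt := Convex.norm_image_sub_le_of_norm_hasDerivWithin_le
    (f := fun y => Real.log (Mf m zs t y)) (f' := f1)
    (s := Set.Icc (min (zs t) z) (max (zs t) z))
    (fun x _ => (hflog x).hasDerivWithinAt) hbd (convex_Icc _ _)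
    ⟨min_le_left _ _, le_max_left _ _⟩ ⟨min_le_right _ _, le_max_right _ _⟩
  simp only [Mf_self, Real.log_one, sub_zero, Real.norm_eq_abs] at hmvt
  calc |Real.log (Mf m zs t z)| ≤ (C₂ + C₁ ^ 2) * |z - zs t| * |z - zs t| := hmvt
    _ = (C₂ + C₁ ^ 2) * (z - zs t) ^ 2 := by rw [mul_assoc, abs_mul_abs_self]; ring


lemma Vstar_eq (m zs : ℝ → ℝ) (t z : ℝ) : Vstar m zs t z =
    ∑' k : ℕ, (2 : ℝ) ^ k * Real.log (Mf m zs t (zs t + (2 : ℝ) ^ (-(k : ℤ)) * (z - zs t))) :=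
  rfl

theorem statement_0 (m zs : ℝ → ℝ) (α a : ℝ) (hA : AssumptionA m zs α a) :
    (∀ t z : ℝ, 0 ≤ t →
      Summable (fun k : ℕ =>
        |(2 : ℝ) ^ k * Real.log (Mf m zs t (zs t + (2 : ℝ) ^ (-(k : ℤ)) * (z - zs t)))|)) ∧
    (∀ t : ℝ, 0 ≤ t → Vstar m zs t (zs t) = 0) ∧
    (∀ t z : ℝ, 0 ≤ t →
      Mf m zs t z =
        Real.exp (Vstar m zs t z - 2 * Vstar m zs t (zbar zs t z) + Vstar m zs t (zs t))) ∧
    (∀ p₀ q₀ : ℝ → ℝ, ∀ t z : ℝ, 0 ≤ t →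
      Mf m zs t z =
        Real.exp ((p₀ t + q₀ t * (z - zs t) + Vstar m zs t z)
          - 2 * (p₀ t + q₀ t * (zbar zs t z - zs t) + Vstar m zs t (zbar zs t z))
          + (p₀ t + q₀ t * (zs t - zs t) + Vstar m zs t (zs t)))) := by
  obtain ⟨δ, hδ, hM⟩ := hA.Mpos
  obtain ⟨C₁, hC1⟩ := hA.Mdecay 1 (by norm_num) (by norm_num)
  obtain ⟨C₂, hC2⟩ := hA.Mdecay 2 (by norm_num) (by norm_num)
  obtain ⟨K, hK0, hKey⟩ := log_Mf_quadratic hA.alpha_pos hA.msmooth δ C₁ C₂ hδ hM hC1 hC2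
  have hpos : ∀ t z : ℝ, 0 ≤ t → 0 < Mf m zs t z := fun t z ht =>
    lt_of_lt_of_le hδ (hM t z ht)
  have hpow : ∀ k : ℕ, (2:ℝ) ^ (-(k:ℤ)) = ((2:ℝ) ^ k)⁻¹ := fun k => by
    rw [zpow_neg, zpow_natCast]
  have hterm : ∀ t z : ℝ, 0 ≤ t → ∀ k : ℕ,
      |(2:ℝ) ^ k * Real.log (Mf m zs t (zs t + (2:ℝ) ^ (-(k:ℤ)) * (z - zs t)))|
        ≤ (K * (z - zs t) ^ 2) * (1/2 : ℝ) ^ k := by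
    intro t z ht k
    have h2k : (0:ℝ) < 2 ^ k := pow_pos two_pos k
    rw [abs_mul, abs_of_pos h2k]
    calc (2:ℝ) ^ k * |Real.log (Mf m zs t (zs t + (2:ℝ) ^ (-(k:ℤ)) * (z - zs t)))|
        ≤ (2:ℝ) ^ k * (K * (zs t + (2:ℝ) ^ (-(k:ℤ)) * (z - zs t) - zs t) ^ 2) :=
          mul_le_mul_of_nonneg_left (hKey t _ ht) h2k.le
      _ = (K * (z - zs t) ^ 2) * (1/2 : ℝ) ^ k := by
          rw [hpow k, one_div, inv_pow]
          field_simp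
          ring
  have hsummAbs : ∀ t z : ℝ, 0 ≤ t → Summable (fun k : ℕ =>
      |(2:ℝ) ^ k * Real.log (Mf m zs t (zs t + (2:ℝ) ^ (-(k:ℤ)) * (z - zs t)))|) := by
    intro t z ht
    exact Summable.of_nonneg_of_le (fun k => abs_nonneg _) (hterm t z ht)
      ((summable_geometric_of_lt_one (by norm_num) (by norm_num)).mul_left _)
  have hVzero : ∀ t : ℝ, 0 ≤ t → Vstar m zs t (zs t) = 0 := by
    intro t ht
    simp [Vstar, Mf]
  have hMain : ∀ t z : ℝ, 0 ≤ t → Mf m zs t z =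
      Real.exp (Vstar m zs t z - 2 * Vstar m zs t (zbar zs t z) + Vstar m zs t (zs t)) := by
    intro t z ht
    have hcs : Summable (fun k : ℕ =>
        (2:ℝ) ^ k * Real.log (Mf m zs t (zs t + (2:ℝ) ^ (-(k:ℤ)) * (z - zs t)))) :=
      (hsummAbs t z ht).of_abs
    have hzb : zbar zs t z - zs t = (z - zs t) / 2 := by unfold zbar; ring
    have hVb : 2 * Vstar m zs t (zbar zs t z)
        = ∑' k : ℕ, (2:ℝ) ^ (k+1) *
            Real.log (Mf m zs t (zs t + (2:ℝ) ^ (-((k+1:ℕ):ℤ)) * (z - zs t))) := by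
      rw [Vstar_eq, ← tsum_mul_left]
      refine tsum_congr fun k => ?_
      have harg : zs t + (2:ℝ) ^ (-(k:ℤ)) * (zbar zs t z - zs t)
          = zs t + (2:ℝ) ^ (-((k+1:ℕ):ℤ)) * (z - zs t) := by
        rw [hzb]
        congr 1
        have h1 : (2:ℝ) ^ (-((k+1:ℕ):ℤ)) = (2:ℝ) ^ (-(k:ℤ)) / 2 := by
          push_cast
          rw [neg_add, zpow_add₀ (two_ne_zero : (2:ℝ) ≠ 0)]
          norm_num
          ring
        rw [h1]; ring
      rw [harg, pow_succ]; ring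
    have hVz : Vstar m zs t z
        = (2:ℝ) ^ (0:ℕ) * Real.log (Mf m zs t (zs t + (2:ℝ) ^ (-((0:ℕ):ℤ)) * (z - zs t)))
          + ∑' k : ℕ, (2:ℝ) ^ (k+1) *
              Real.log (Mf m zs t (zs t + (2:ℝ) ^ (-((k+1:ℕ):ℤ)) * (z - zs t))) := by
      rw [Vstar_eq]
      exact Summable.tsum_eq_zero_add hcs
    rw [hVz, hVb, hVzero t ht]
    have h00 : zs t + (2:ℝ) ^ (-((0:ℕ):ℤ)) * (z - zs t) = z := by norm_num
    rw [h00]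
    have hfin : ((2:ℝ) ^ (0:ℕ) * Real.log (Mf m zs t z)
          + ∑' k : ℕ, (2:ℝ) ^ (k+1) *
              Real.log (Mf m zs t (zs t + (2:ℝ) ^ (-((k+1:ℕ):ℤ)) * (z - zs t))))
        - (∑' k : ℕ, (2:ℝ) ^ (k+1) *
              Real.log (Mf m zs t (zs t + (2:ℝ) ^ (-((k+1:ℕ):ℤ)) * (z - zs t))))
        + 0 = Real.log (Mf m zs t z) := by ring
    rw [hfin, Real.exp_log (hpos t z ht)]
  refine ⟨hsummAbs, hVzero, hMain, ?_⟩
  intro p₀ q₀ t z ht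
  rw [hMain t z ht]
  congr 1
  unfold zbar
  ring
end
end

section
/- Under Assumption (A), the function V*(t,z) = Σ_{k≥0} 2^k log( M(t, z*(t) + 2^{−k}(z − z*(t))) ) belongs to the space ℰ* (in particular V*(t,z*(t)) = ∂_zV*(t,z*(t)) = 0 for all t, ∂_zV* is bounded, and φ_α ∂_z^j V* is bounded for j = 2,3,4,5), and moreover for every t ≥ 0: ∂_z²V*(t,z*(t)) = 2 m''(z*(t)) and ∂_z³V*(t,z*(t)) = (4/3) m'''(z*(t)). -/
open MeasureTheory Filter

noncomputable section

noncomputable section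
namespace Stmt1

def rr (M : ℝ → ℝ) (j : ℕ) (z : ℝ) : ℝ := iteratedDeriv j M z / M z

def gd (M : ℝ → ℝ) : ℕ → ℝ → ℝ
  | 0 => fun z => Real.log (M z)
  | 1 => fun z => rr M 1 z
  | 2 => fun z => rr M 2 z - (rr M 1 z) ^ 2
  | 3 => fun z => rr M 3 z - 3 * rr M 2 z * rr M 1 z + 2 * (rr M 1 z) ^ 3
  | 4 => fun z => rr M 4 z - 4 * rr M 3 z * rr M 1 z - 3 * (rr M 2 z) ^ 2
      + 12 * rr M 2 z * (rr M 1 z) ^ 2 - 6 * (rr M 1 z) ^ 4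
  | _ => fun z => rr M 5 z - 5 * rr M 4 z * rr M 1 z - 10 * rr M 3 z * rr M 2 z
      + 20 * rr M 3 z * (rr M 1 z) ^ 2 + 30 * (rr M 2 z) ^ 2 * rr M 1 z
      - 60 * rr M 2 z * (rr M 1 z) ^ 3 + 24 * (rr M 1 z) ^ 5

structure Nice (M : ℝ → ℝ) (δ C α c : ℝ) : Prop where
  hδ : 0 < δ
  hα : 0 < α
  hα1 : α < 1
  hM : ∀ z, δ ≤ M z
  h5 : ContDiff ℝ 5 M
  hc1 : M c = 1
  hc2 : deriv M c = 0
  hC : 0 ≤ C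
  hbd : ∀ j, 1 ≤ j → j ≤ 5 → ∀ z, (1 + |z - c|) ^ α * |iteratedDeriv j M z| ≤ C * M z

variable {M : ℝ → ℝ} {δ C α c : ℝ}

theorem Nice.Mpos (hN : Nice M δ C α c) (z : ℝ) : 0 < M z := hN.hδ.trans_le (hN.hM z)

theorem Nice.hasDerivAt_iter (hN : Nice M δ C α c) (j : ℕ) (hj : j ≤ 4) (z : ℝ) :
    HasDerivAt (iteratedDeriv j M) (iteratedDeriv (j + 1) M z) z := by
  have hd : Differentiable ℝ (iteratedDeriv j M) := by
    apply hN.h5.differentiable_iteratedDeriv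
    exact_mod_cast Nat.lt_succ_of_le hj
  have h := (hd z).hasDerivAt
  rwa [← iteratedDeriv_succ] at h

theorem Nice.hasDerivAt_M (hN : Nice M δ C α c) (z : ℝ) :
    HasDerivAt M (iteratedDeriv 1 M z) z := by
  have := hN.hasDerivAt_iter 0 (by norm_num) z
  rwa [iteratedDeriv_zero] at this

theorem Nice.hasDerivAt_rr (hN : Nice M δ C α c) (j : ℕ) (hj : j ≤ 4) (z : ℝ) :
    HasDerivAt (rr M j) (rr M (j + 1) z - rr M j z * rr M 1 z) z := by
  have h1 := hN.hasDerivAt_iter j hj z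
  have h2 := hN.hasDerivAt_M z
  have hz := (hN.Mpos z).ne'
  have h := h1.div h2 hz
  refine h.congr_deriv ?_
  unfold rr
  rw [iteratedDeriv_one] at *
  field_simp

theorem Nice.hasDerivAt_gd (hN : Nice M δ C α c) (j : ℕ) (hj : j ≤ 4) (z : ℝ) :
    HasDerivAt (gd M j) (gd M (j + 1) z) z := by
  have h1 := hN.hasDerivAt_rr 1 (by norm_num) z
  have h2 := hN.hasDerivAt_rr 2 (by norm_num) z
  have h3 := hN.hasDerivAt_rr 3 (by norm_num) z
  have h4 := hN.hasDerivAt_rr 4 (by norm_num) z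
  interval_cases j
  · have hz := (hN.Mpos z).ne'
    have h := (hN.hasDerivAt_M z).log hz
    show HasDerivAt (fun z => Real.log (M z)) (rr M 1 z) z
    rwa [show rr M 1 z = iteratedDeriv 1 M z / M z from rfl]
  · show HasDerivAt (fun z => rr M 1 z) (rr M 2 z - (rr M 1 z) ^ 2) z
    convert h1 using 1
    all_goals try ext x
    all_goals try push_cast
    all_goals try norm_num
    all_goals ring
  · show HasDerivAt (fun z => rr M 2 z - (rr M 1 z) ^ 2)
      (rr M 3 z - 3 * rr M 2 z * rr M 1 z + 2 * (rr M 1 z) ^ 3) z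
    convert h2.sub (h1.pow 2) using 1
    all_goals try ext x
    all_goals try push_cast
    all_goals try norm_num
    all_goals ring
  · show HasDerivAt (fun z => rr M 3 z - 3 * rr M 2 z * rr M 1 z + 2 * (rr M 1 z) ^ 3)
      (rr M 4 z - 4 * rr M 3 z * rr M 1 z - 3 * (rr M 2 z) ^ 2
        + 12 * rr M 2 z * (rr M 1 z) ^ 2 - 6 * (rr M 1 z) ^ 4) z
    convert (h3.sub (((h2.mul h1)).const_mul 3)).add ((h1.pow 3).const_mul 2) using 1
    all_goals try ext x
    all_goals try push_cast
    all_goals try norm_num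
    all_goals ring
  · show HasDerivAt (fun z => rr M 4 z - 4 * rr M 3 z * rr M 1 z - 3 * (rr M 2 z) ^ 2
        + 12 * rr M 2 z * (rr M 1 z) ^ 2 - 6 * (rr M 1 z) ^ 4)
      (rr M 5 z - 5 * rr M 4 z * rr M 1 z - 10 * rr M 3 z * rr M 2 z
        + 20 * rr M 3 z * (rr M 1 z) ^ 2 + 30 * (rr M 2 z) ^ 2 * rr M 1 z
        - 60 * rr M 2 z * (rr M 1 z) ^ 3 + 24 * (rr M 1 z) ^ 5) z
    convert ((((h4.sub ((h3.mul h1).const_mul 4)).sub ((h2.pow 2).const_mul 3)).add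
      (((h2.mul (h1.pow 2))).const_mul 12)).sub ((h1.pow 4).const_mul 6)) using 1
    all_goals try ext x
    all_goals try push_cast
    all_goals try norm_num
    all_goals ring

end Stmt1

namespace Stmt1
variable {M : ℝ → ℝ} {δ C α c : ℝ}

theorem Nice.phi_one_le (hN : Nice M δ C α c) (z x : ℝ) : 1 ≤ (1 + |z - x|) ^ α := by
  calc (1:ℝ) = 1 ^ α := (Real.one_rpow α).symm
  _ ≤ (1 + |z - x|) ^ α :=
    Real.rpow_le_rpow (by norm_num) (le_add_of_nonneg_right (abs_nonneg _)) hN.hα.le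

theorem Nice.rr_bd (hN : Nice M δ C α c) (j : ℕ) (hj1 : 1 ≤ j) (hj5 : j ≤ 5) (z : ℝ) :
    (1 + |z - c|) ^ α * |rr M j z| ≤ C := by
  have hMz := hN.Mpos z
  have h := hN.hbd j hj1 hj5 z
  unfold rr
  rw [abs_div, abs_of_pos hMz, ← mul_div_assoc, div_le_iff₀ hMz]
  exact h

theorem Nice.rr_bd' (hN : Nice M δ C α c) (j : ℕ) (hj1 : 1 ≤ j) (hj5 : j ≤ 5) (z : ℝ) :
    |rr M j z| ≤ C :=
  le_trans (le_mul_of_one_le_left (abs_nonneg _) (hN.phi_one_le z c)) (hN.rr_bd j hj1 hj5 z)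

/-- common bound for the log-derivatives -/
def KK (C : ℝ) : ℝ := C + 105 * C ^ 2 + 50 * C ^ 3 + 60 * C ^ 4 + 24 * C ^ 5

theorem KK_nonneg (hC : 0 ≤ C) : 0 ≤ KK C := by unfold KK; positivity

theorem le_KK (hC : 0 ≤ C) : C ≤ KK C := by
  unfold KK
  nlinarith [pow_nonneg hC 2, pow_nonneg hC 3, pow_nonneg hC 4, pow_nonneg hC 5]

theorem Nice.gd_bd (hN : Nice M δ C α c) (j : ℕ) (hj1 : 1 ≤ j) (hj5 : j ≤ 5) (z : ℝ) :
    (1 + |z - c|) ^ α * |gd M j z| ≤ KK C := by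
  have hφ1 := hN.phi_one_le z c
  have hφ0 : (0:ℝ) ≤ (1 + |z - c|) ^ α := by linarith
  have hC := hN.hC
  have b1 := hN.rr_bd 1 (by norm_num) (by norm_num) z
  have b2 := hN.rr_bd 2 (by norm_num) (by norm_num) z
  have b3 := hN.rr_bd 3 (by norm_num) (by norm_num) z
  have b4 := hN.rr_bd 4 (by norm_num) (by norm_num) z
  have b5 := hN.rr_bd 5 (by norm_num) (by norm_num) z
  have a1 := hN.rr_bd' 1 (by norm_num) (by norm_num) z
  have a2 := hN.rr_bd' 2 (by norm_num) (by norm_num) z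
  have a3 := hN.rr_bd' 3 (by norm_num) (by norm_num) z
  have hp2 := pow_nonneg hC 2
  have hp3 := pow_nonneg hC 3
  have hp4 := pow_nonneg hC 4
  have hp5 := pow_nonneg hC 5
  set φ := (1 + |z - c|) ^ α with hφ
  interval_cases j
  · show φ * |rr M 1 z| ≤ KK C
    unfold KK; linarith
  · have tri : |gd M 2 z| ≤ |rr M 2 z| + |rr M 1 z| ^ 2 := by
      show |rr M 2 z - rr M 1 z ^ 2| ≤ _
      exact (abs_sub _ _).trans (by rw [abs_pow])
    have m1 : (φ * |rr M 1 z|) * |rr M 1 z| ≤ C * C :=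
      mul_le_mul b1 a1 (abs_nonneg _) hC
    calc φ * |gd M 2 z| ≤ φ * (|rr M 2 z| + |rr M 1 z| ^ 2) :=
          mul_le_mul_of_nonneg_left tri hφ0
    _ = φ * |rr M 2 z| + (φ * |rr M 1 z|) * |rr M 1 z| := by ring
    _ ≤ KK C := by unfold KK; linarith
  · have tri : |gd M 3 z| ≤ |rr M 3 z| + 3 * (|rr M 2 z| * |rr M 1 z|) + 2 * |rr M 1 z| ^ 3 := by
      show |rr M 3 z - 3 * rr M 2 z * rr M 1 z + 2 * rr M 1 z ^ 3| ≤ _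
      calc |rr M 3 z - 3 * rr M 2 z * rr M 1 z + 2 * rr M 1 z ^ 3|
          ≤ |rr M 3 z - 3 * rr M 2 z * rr M 1 z| + |2 * rr M 1 z ^ 3| := abs_add_le _ _
      _ ≤ |rr M 3 z| + |3 * rr M 2 z * rr M 1 z| + |2 * rr M 1 z ^ 3| := by
            linarith [abs_sub (rr M 3 z) (3 * rr M 2 z * rr M 1 z)]
      _ = |rr M 3 z| + 3 * (|rr M 2 z| * |rr M 1 z|) + 2 * |rr M 1 z| ^ 3 := by
            simp only [abs_mul, abs_pow]; norm_num; try ring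
    have m1 : (φ * |rr M 2 z|) * |rr M 1 z| ≤ C * C :=
      mul_le_mul b2 a1 (abs_nonneg _) hC
    have m2 : (φ * |rr M 1 z|) * |rr M 1 z| ^ 2 ≤ C * C ^ 2 :=
      mul_le_mul b1 (pow_le_pow_left₀ (abs_nonneg _) a1 2) (by positivity) hC
    calc φ * |gd M 3 z| ≤ φ * (|rr M 3 z| + 3 * (|rr M 2 z| * |rr M 1 z|) + 2 * |rr M 1 z| ^ 3) :=
          mul_le_mul_of_nonneg_left tri hφ0
    _ = φ * |rr M 3 z| + 3 * ((φ * |rr M 2 z|) * |rr M 1 z|)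
        + 2 * ((φ * |rr M 1 z|) * |rr M 1 z| ^ 2) := by ring
    _ ≤ KK C := by unfold KK; linarith
  · have tri : |gd M 4 z| ≤ |rr M 4 z| + 4 * (|rr M 3 z| * |rr M 1 z|) + 3 * |rr M 2 z| ^ 2
        + 12 * (|rr M 2 z| * |rr M 1 z| ^ 2) + 6 * |rr M 1 z| ^ 4 := by
      show |rr M 4 z - 4 * rr M 3 z * rr M 1 z - 3 * rr M 2 z ^ 2
          + 12 * rr M 2 z * rr M 1 z ^ 2 - 6 * rr M 1 z ^ 4| ≤ _
      calc |rr M 4 z - 4 * rr M 3 z * rr M 1 z - 3 * rr M 2 z ^ 2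
          + 12 * rr M 2 z * rr M 1 z ^ 2 - 6 * rr M 1 z ^ 4|
          ≤ |rr M 4 z - 4 * rr M 3 z * rr M 1 z - 3 * rr M 2 z ^ 2
            + 12 * rr M 2 z * rr M 1 z ^ 2| + |6 * rr M 1 z ^ 4| := abs_sub _ _
      _ ≤ |rr M 4 z - 4 * rr M 3 z * rr M 1 z - 3 * rr M 2 z ^ 2|
            + |12 * rr M 2 z * rr M 1 z ^ 2| + |6 * rr M 1 z ^ 4| := by
            linarith [abs_add_le (rr M 4 z - 4 * rr M 3 z * rr M 1 z - 3 * rr M 2 z ^ 2)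
              (12 * rr M 2 z * rr M 1 z ^ 2)]
      _ ≤ |rr M 4 z - 4 * rr M 3 z * rr M 1 z| + |3 * rr M 2 z ^ 2|
            + |12 * rr M 2 z * rr M 1 z ^ 2| + |6 * rr M 1 z ^ 4| := by
            linarith [abs_sub (rr M 4 z - 4 * rr M 3 z * rr M 1 z) (3 * rr M 2 z ^ 2)]
      _ ≤ |rr M 4 z| + |4 * rr M 3 z * rr M 1 z| + |3 * rr M 2 z ^ 2|
            + |12 * rr M 2 z * rr M 1 z ^ 2| + |6 * rr M 1 z ^ 4| := by
            linarith [abs_sub (rr M 4 z) (4 * rr M 3 z * rr M 1 z)]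
      _ = |rr M 4 z| + 4 * (|rr M 3 z| * |rr M 1 z|) + 3 * |rr M 2 z| ^ 2
            + 12 * (|rr M 2 z| * |rr M 1 z| ^ 2) + 6 * |rr M 1 z| ^ 4 := by
            simp only [abs_mul, abs_pow]; norm_num; try ring
    have m1 : (φ * |rr M 3 z|) * |rr M 1 z| ≤ C * C :=
      mul_le_mul b3 a1 (abs_nonneg _) hC
    have m2 : (φ * |rr M 2 z|) * |rr M 2 z| ≤ C * C :=
      mul_le_mul b2 a2 (abs_nonneg _) hC
    have m3 : (φ * |rr M 2 z|) * |rr M 1 z| ^ 2 ≤ C * C ^ 2 :=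
      mul_le_mul b2 (pow_le_pow_left₀ (abs_nonneg _) a1 2) (by positivity) hC
    have m4 : (φ * |rr M 1 z|) * |rr M 1 z| ^ 3 ≤ C * C ^ 3 :=
      mul_le_mul b1 (pow_le_pow_left₀ (abs_nonneg _) a1 3) (by positivity) hC
    calc φ * |gd M 4 z| ≤ φ * (|rr M 4 z| + 4 * (|rr M 3 z| * |rr M 1 z|) + 3 * |rr M 2 z| ^ 2
        + 12 * (|rr M 2 z| * |rr M 1 z| ^ 2) + 6 * |rr M 1 z| ^ 4) :=
          mul_le_mul_of_nonneg_left tri hφ0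
    _ = φ * |rr M 4 z| + 4 * ((φ * |rr M 3 z|) * |rr M 1 z|) + 3 * ((φ * |rr M 2 z|) * |rr M 2 z|)
        + 12 * ((φ * |rr M 2 z|) * |rr M 1 z| ^ 2)
        + 6 * ((φ * |rr M 1 z|) * |rr M 1 z| ^ 3) := by ring
    _ ≤ KK C := by unfold KK; linarith
  · have tri : |gd M 5 z| ≤ |rr M 5 z| + 5 * (|rr M 4 z| * |rr M 1 z|)
        + 10 * (|rr M 3 z| * |rr M 2 z|) + 20 * (|rr M 3 z| * |rr M 1 z| ^ 2)
        + 30 * (|rr M 2 z| ^ 2 * |rr M 1 z|) + 60 * (|rr M 2 z| * |rr M 1 z| ^ 3)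
        + 24 * |rr M 1 z| ^ 5 := by
      show |rr M 5 z - 5 * rr M 4 z * rr M 1 z - 10 * rr M 3 z * rr M 2 z
          + 20 * rr M 3 z * rr M 1 z ^ 2 + 30 * rr M 2 z ^ 2 * rr M 1 z
          - 60 * rr M 2 z * rr M 1 z ^ 3 + 24 * rr M 1 z ^ 5| ≤ _
      have t1 := abs_add_le (rr M 5 z - 5 * rr M 4 z * rr M 1 z - 10 * rr M 3 z * rr M 2 z
          + 20 * rr M 3 z * rr M 1 z ^ 2 + 30 * rr M 2 z ^ 2 * rr M 1 z
          - 60 * rr M 2 z * rr M 1 z ^ 3) (24 * rr M 1 z ^ 5)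
      have t2 := abs_sub (rr M 5 z - 5 * rr M 4 z * rr M 1 z - 10 * rr M 3 z * rr M 2 z
          + 20 * rr M 3 z * rr M 1 z ^ 2 + 30 * rr M 2 z ^ 2 * rr M 1 z)
          (60 * rr M 2 z * rr M 1 z ^ 3)
      have t3 := abs_add_le (rr M 5 z - 5 * rr M 4 z * rr M 1 z - 10 * rr M 3 z * rr M 2 z
          + 20 * rr M 3 z * rr M 1 z ^ 2) (30 * rr M 2 z ^ 2 * rr M 1 z)
      have t4 := abs_add_le (rr M 5 z - 5 * rr M 4 z * rr M 1 z - 10 * rr M 3 z * rr M 2 z)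
          (20 * rr M 3 z * rr M 1 z ^ 2)
      have t5 := abs_sub (rr M 5 z - 5 * rr M 4 z * rr M 1 z) (10 * rr M 3 z * rr M 2 z)
      have t6 := abs_sub (rr M 5 z) (5 * rr M 4 z * rr M 1 z)
      have e1 : |5 * rr M 4 z * rr M 1 z| = 5 * (|rr M 4 z| * |rr M 1 z|) := by
        simp only [abs_mul]; norm_num; try ring
      have e2 : |10 * rr M 3 z * rr M 2 z| = 10 * (|rr M 3 z| * |rr M 2 z|) := by
        simp only [abs_mul]; norm_num; try ring
      have e3 : |20 * rr M 3 z * rr M 1 z ^ 2| = 20 * (|rr M 3 z| * |rr M 1 z| ^ 2) := by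
        simp only [abs_mul, abs_pow]; norm_num; try ring
      have e4 : |30 * rr M 2 z ^ 2 * rr M 1 z| = 30 * (|rr M 2 z| ^ 2 * |rr M 1 z|) := by
        simp only [abs_mul, abs_pow]; norm_num; try ring
      have e5 : |60 * rr M 2 z * rr M 1 z ^ 3| = 60 * (|rr M 2 z| * |rr M 1 z| ^ 3) := by
        simp only [abs_mul, abs_pow]; norm_num; try ring
      have e6 : |24 * rr M 1 z ^ 5| = 24 * |rr M 1 z| ^ 5 := by
        simp only [abs_mul, abs_pow]; norm_num
      rw [e1] at t6; rw [e2] at t5; rw [e3] at t4; rw [e4] at t3; rw [e5] at t2; rw [e6] at t1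
      linarith
    have m1 : (φ * |rr M 4 z|) * |rr M 1 z| ≤ C * C :=
      mul_le_mul b4 a1 (abs_nonneg _) hC
    have m2 : (φ * |rr M 3 z|) * |rr M 2 z| ≤ C * C :=
      mul_le_mul b3 a2 (abs_nonneg _) hC
    have m3 : (φ * |rr M 3 z|) * |rr M 1 z| ^ 2 ≤ C * C ^ 2 :=
      mul_le_mul b3 (pow_le_pow_left₀ (abs_nonneg _) a1 2) (by positivity) hC
    have m4 : (φ * |rr M 2 z|) * (|rr M 2 z| * |rr M 1 z|) ≤ C * (C * C) :=
      mul_le_mul b2 (mul_le_mul a2 a1 (abs_nonneg _) hC) (by positivity) hC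
    have m5 : (φ * |rr M 2 z|) * |rr M 1 z| ^ 3 ≤ C * C ^ 3 :=
      mul_le_mul b2 (pow_le_pow_left₀ (abs_nonneg _) a1 3) (by positivity) hC
    have m6 : (φ * |rr M 1 z|) * |rr M 1 z| ^ 4 ≤ C * C ^ 4 :=
      mul_le_mul b1 (pow_le_pow_left₀ (abs_nonneg _) a1 4) (by positivity) hC
    calc φ * |gd M 5 z| ≤ φ * (|rr M 5 z| + 5 * (|rr M 4 z| * |rr M 1 z|)
        + 10 * (|rr M 3 z| * |rr M 2 z|) + 20 * (|rr M 3 z| * |rr M 1 z| ^ 2)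
        + 30 * (|rr M 2 z| ^ 2 * |rr M 1 z|) + 60 * (|rr M 2 z| * |rr M 1 z| ^ 3)
        + 24 * |rr M 1 z| ^ 5) := mul_le_mul_of_nonneg_left tri hφ0
    _ = φ * |rr M 5 z| + 5 * ((φ * |rr M 4 z|) * |rr M 1 z|)
        + 10 * ((φ * |rr M 3 z|) * |rr M 2 z|) + 20 * ((φ * |rr M 3 z|) * |rr M 1 z| ^ 2)
        + 30 * ((φ * |rr M 2 z|) * (|rr M 2 z| * |rr M 1 z|))
        + 60 * ((φ * |rr M 2 z|) * |rr M 1 z| ^ 3)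
        + 24 * ((φ * |rr M 1 z|) * |rr M 1 z| ^ 4) := by ring
    _ ≤ KK C := by unfold KK; linarith

theorem Nice.gd_bd' (hN : Nice M δ C α c) (j : ℕ) (hj1 : 1 ≤ j) (hj5 : j ≤ 5) (z : ℝ) :
    |gd M j z| ≤ KK C :=
  le_trans (le_mul_of_one_le_left (abs_nonneg _) (hN.phi_one_le z c)) (hN.gd_bd j hj1 hj5 z)

theorem Nice.gd0_c (hN : Nice M δ C α c) : gd M 0 c = 0 := by
  show Real.log (M c) = 0
  rw [hN.hc1, Real.log_one]

theorem Nice.rr1_c (hN : Nice M δ C α c) : rr M 1 c = 0 := by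
  unfold rr
  rw [iteratedDeriv_one, hN.hc2, zero_div]

theorem Nice.gd1_c (hN : Nice M δ C α c) : gd M 1 c = 0 := hN.rr1_c

theorem Nice.gd2_c (hN : Nice M δ C α c) : gd M 2 c = iteratedDeriv 2 M c := by
  show rr M 2 c - (rr M 1 c) ^ 2 = _
  rw [hN.rr1_c]
  unfold rr
  rw [hN.hc1]
  ring

theorem Nice.gd3_c (hN : Nice M δ C α c) : gd M 3 c = iteratedDeriv 3 M c := by
  show rr M 3 c - 3 * rr M 2 c * rr M 1 c + 2 * (rr M 1 c) ^ 3 = _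
  rw [hN.rr1_c]
  unfold rr
  rw [hN.hc1]
  ring

theorem Nice.gd1_lip (hN : Nice M δ C α c) (z : ℝ) : |gd M 1 z| ≤ KK C * |z - c| := by
  have h := Convex.norm_image_sub_le_of_norm_deriv_le (f := gd M 1) (s := Set.univ)
    (fun x _ => (hN.hasDerivAt_gd 1 (by norm_num) x).differentiableAt)
    (fun x _ => by
      rw [(hN.hasDerivAt_gd 1 (by norm_num) x).deriv]
      simpa using hN.gd_bd' 2 (by norm_num) (by norm_num) x)
    convex_univ (Set.mem_univ c) (Set.mem_univ z)
  simpa [hN.gd1_c] using h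

end Stmt1

namespace Stmt1
variable {M : ℝ → ℝ} {δ C α c : ℝ}

/-- scaled point -/
def pp (c : ℝ) (k : ℕ) (z : ℝ) : ℝ := c + (2:ℝ) ^ (-(k:ℤ)) * (z - c)

/-- coefficient of the `k`-th term of the `j`-th derivative series -/
def co (j k : ℕ) : ℝ := (2:ℝ) ^ ((1 - (j:ℤ)) * k)

/-- the `j`-th derivative series -/
def FF (M : ℝ → ℝ) (c : ℝ) (j : ℕ) (z : ℝ) : ℝ := ∑' k : ℕ, co j k * gd M j (pp c k z)

theorem co_pos (j k : ℕ) : 0 < co j k := zpow_pos two_pos _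

theorem co_eq (j k : ℕ) : co j k = ((2:ℝ) ^ (1 - (j:ℤ))) ^ k := by
  rw [co, zpow_mul, ← zpow_natCast (((2:ℝ) ^ (1 - (j:ℤ)))) k]

theorem co_zero (k : ℕ) : co 0 k = (2:ℝ) ^ k := by
  rw [co]
  norm_num

theorem co_one (k : ℕ) : co 1 k = 1 := by
  simp [co]

theorem co_succ (j k : ℕ) : co j k * (2:ℝ) ^ (-(k:ℤ)) = co (j + 1) k := by
  rw [co, co, ← zpow_add₀ (two_ne_zero)]
  congr 1
  push_cast
  ring

theorem pp_c (c : ℝ) (k : ℕ) : pp c k c = c := by simp [pp]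

theorem pp_sub (c : ℝ) (k : ℕ) (z : ℝ) : pp c k z - c = (2:ℝ) ^ (-(k:ℤ)) * (z - c) := by
  simp [pp]

theorem hasDerivAt_pp (c : ℝ) (k : ℕ) (z : ℝ) :
    HasDerivAt (pp c k) ((2:ℝ) ^ (-(k:ℤ))) z := by
  have h := (((hasDerivAt_id z).sub_const c).const_mul ((2:ℝ) ^ (-(k:ℤ)))).const_add c
  unfold pp
  refine h.congr_deriv ?_
  rw [mul_one]

theorem Nice.hasDerivAt_term (hN : Nice M δ C α c) (j : ℕ) (hj : j ≤ 4) (k : ℕ) (z : ℝ) :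
    HasDerivAt (fun z => co j k * gd M j (pp c k z))
      (co (j + 1) k * gd M (j + 1) (pp c k z)) z := by
  have h := ((hN.hasDerivAt_gd j hj (pp c k z)).comp z (hasDerivAt_pp c k z)).const_mul (co j k)
  rw [← co_succ]
  refine h.congr_deriv ?_
  ring

end Stmt1

namespace Stmt1
variable {M : ℝ → ℝ} {δ C α c : ℝ}

theorem two_zpow_neg_eq (k : ℕ) : (2:ℝ) ^ (-(k:ℤ)) = (1/2:ℝ) ^ k := by
  rw [zpow_neg, zpow_natCast, ← inv_pow, one_div]

theorem co_le (j k : ℕ) (hj : 2 ≤ j) : co j k ≤ (1/2:ℝ) ^ k := by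
  rw [co_eq]
  apply pow_le_pow_left₀ (zpow_pos two_pos _).le
  calc (2:ℝ) ^ (1 - (j:ℤ)) ≤ (2:ℝ) ^ (-1:ℤ) :=
        zpow_le_zpow_right₀ one_le_two (by omega)
  _ = 1/2 := by norm_num

theorem Nice.abs_term_le (hN : Nice M δ C α c) (j : ℕ) (hj2 : 2 ≤ j) (hj5 : j ≤ 5) (k : ℕ)
    (y : ℝ) : |co j k * gd M j (pp c k y)| ≤ KK C * (1/2:ℝ) ^ k := by
  rw [abs_mul, abs_of_pos (co_pos _ _)]
  have h := mul_le_mul (co_le j k hj2) (hN.gd_bd' j (by omega) hj5 (pp c k y))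
    (abs_nonneg _) (by positivity : (0:ℝ) ≤ (1/2:ℝ) ^ k)
  linarith

theorem Nice.abs_term1_le (hN : Nice M δ C α c) (k : ℕ) (y : ℝ) :
    |co 1 k * gd M 1 (pp c k y)| ≤ (KK C * |y - c|) * (1/2:ℝ) ^ k := by
  rw [co_one, one_mul]
  calc |gd M 1 (pp c k y)| ≤ KK C * |pp c k y - c| := hN.gd1_lip _
  _ = KK C * ((2:ℝ) ^ (-(k:ℤ)) * |y - c|) := by
      rw [pp_sub, abs_mul, abs_of_pos (zpow_pos two_pos _)]
  _ = (KK C * |y - c|) * (1/2:ℝ) ^ k := by rw [two_zpow_neg_eq]; ring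

theorem Nice.summable_abs_term (hN : Nice M δ C α c) (j : ℕ) (hj1 : 1 ≤ j) (hj5 : j ≤ 5)
    (z : ℝ) : Summable fun k => |co j k * gd M j (pp c k z)| := by
  have hgeo : Summable fun k : ℕ => (1/2:ℝ) ^ k :=
    summable_geometric_of_lt_one (by norm_num) (by norm_num)
  rcases eq_or_lt_of_le hj1 with h1 | h1
  · exact Summable.of_nonneg_of_le (fun k => abs_nonneg _)
      (fun k => by rw [← h1]; exact hN.abs_term1_le k z) (hgeo.mul_left (KK C * |z - c|))
  · exact Summable.of_nonneg_of_le (fun k => abs_nonneg _)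
      (fun k => hN.abs_term_le j h1 hj5 k z) (hgeo.mul_left (KK C))

theorem Nice.summable_term (hN : Nice M δ C α c) (j : ℕ) (hj1 : 1 ≤ j) (hj5 : j ≤ 5)
    (z : ℝ) : Summable fun k => co j k * gd M j (pp c k z) :=
  (hN.summable_abs_term j hj1 hj5 z).of_abs

theorem Nice.hasDerivAt_FF (hN : Nice M δ C α c) (j : ℕ) (hj1 : 1 ≤ j) (hj4 : j ≤ 4) (z : ℝ) :
    HasDerivAt (FF M c j) (FF M c (j + 1) z) z := by
  apply hasDerivAt_tsum (u := fun k => KK C * (1/2:ℝ) ^ k)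
    ((summable_geometric_of_lt_one (by norm_num) (by norm_num)).mul_left _)
    (fun k y => hN.hasDerivAt_term j hj4 k y)
    (fun k y => by
      rw [Real.norm_eq_abs]
      exact hN.abs_term_le (j + 1) (by omega) (by omega) k y)
    (hN.summable_term j hj1 (by omega) c)

theorem Nice.hasDerivAt_FF0 (hN : Nice M δ C α c) (z : ℝ) :
    HasDerivAt (FF M c 0) (FF M c 1 z) z := by
  set R := |z - c| + 1 with hR
  have hR0 : 0 < R := by positivity
  refine hasDerivAt_tsum_of_isPreconnected
    ((summable_geometric_of_lt_one (by norm_num : (0:ℝ) ≤ 1/2)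
      (by norm_num : (1/2:ℝ) < 1)).mul_left (KK C * R))
    Metric.isOpen_ball (convex_ball c R).isPreconnected
    (fun k y _ => hN.hasDerivAt_term 0 (by norm_num) k y)
    (fun k y hy => ?_) (Metric.mem_ball_self hR0) ?_ ?_
  · rw [Real.norm_eq_abs]
    refine (hN.abs_term1_le k y).trans ?_
    have h1 : |y - c| ≤ R := by
      rw [Metric.mem_ball, Real.dist_eq] at hy
      linarith
    have h2 : (0:ℝ) ≤ (1/2:ℝ) ^ k := by positivity
    have h3 : 0 ≤ KK C := KK_nonneg hN.hC
    exact mul_le_mul_of_nonneg_right (mul_le_mul_of_nonneg_left h1 h3) h2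
  · apply Summable.congr (f := fun _ : ℕ => (0:ℝ)) summable_zero
    intro k
    rw [pp_c, hN.gd0_c, mul_zero]
  · rw [Metric.mem_ball, Real.dist_eq]
    linarith [abs_nonneg (z - c)]

theorem Nice.deriv_FF (hN : Nice M δ C α c) (j : ℕ) (hj4 : j ≤ 4) :
    deriv (FF M c j) = FF M c (j + 1) := by
  funext z
  rcases Nat.eq_zero_or_pos j with h | h
  · subst h; exact (hN.hasDerivAt_FF0 z).deriv
  · exact (hN.hasDerivAt_FF j h hj4 z).deriv

theorem Nice.differentiable_FF (hN : Nice M δ C α c) (j : ℕ) (hj4 : j ≤ 4) :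
    Differentiable ℝ (FF M c j) := by
  intro z
  rcases Nat.eq_zero_or_pos j with h | h
  · subst h; exact (hN.hasDerivAt_FF0 z).differentiableAt
  · exact (hN.hasDerivAt_FF j h hj4 z).differentiableAt

theorem Nice.iteratedDeriv_FF (hN : Nice M δ C α c) (j : ℕ) (hj : j ≤ 5) :
    iteratedDeriv j (FF M c 0) = FF M c j := by
  have step : ∀ i : ℕ, i ≤ 4 → iteratedDeriv i (FF M c 0) = FF M c i →
      iteratedDeriv (i + 1) (FF M c 0) = FF M c (i + 1) := by
    intro i hi h
    rw [iteratedDeriv_succ, h, hN.deriv_FF i hi]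
  interval_cases j
  · exact iteratedDeriv_zero
  · exact step 0 (by norm_num) iteratedDeriv_zero
  · exact step 1 (by norm_num) (step 0 (by norm_num) iteratedDeriv_zero)
  · exact step 2 (by norm_num) (step 1 (by norm_num) (step 0 (by norm_num) iteratedDeriv_zero))
  · exact step 3 (by norm_num) (step 2 (by norm_num) (step 1 (by norm_num)
      (step 0 (by norm_num) iteratedDeriv_zero)))
  · exact step 4 (by norm_num) (step 3 (by norm_num) (step 2 (by norm_num) (step 1 (by norm_num)
      (step 0 (by norm_num) iteratedDeriv_zero))))

theorem Nice.continuous_rr (hN : Nice M δ C α c) (j : ℕ) (hj : j ≤ 5) :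
    Continuous (rr M j) := by
  apply Continuous.div (hN.h5.continuous_iteratedDeriv j (by exact_mod_cast hj))
    hN.h5.continuous (fun z => (hN.Mpos z).ne')

theorem Nice.continuous_gd5 (hN : Nice M δ C α c) : Continuous (gd M 5) := by
  have c1 := hN.continuous_rr 1 (by norm_num)
  have c2 := hN.continuous_rr 2 (by norm_num)
  have c3 := hN.continuous_rr 3 (by norm_num)
  have c4 := hN.continuous_rr 4 (by norm_num)
  have c5 := hN.continuous_rr 5 (by norm_num)
  show Continuous (fun z => rr M 5 z - 5 * rr M 4 z * rr M 1 z - 10 * rr M 3 z * rr M 2 z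
      + 20 * rr M 3 z * (rr M 1 z) ^ 2 + 30 * (rr M 2 z) ^ 2 * rr M 1 z
      - 60 * rr M 2 z * (rr M 1 z) ^ 3 + 24 * (rr M 1 z) ^ 5)
  exact ((((((c5.sub ((continuous_const.mul c4).mul c1)).sub
    ((continuous_const.mul c3).mul c2)).add
    ((continuous_const.mul c3).mul (c1.pow 2))).add
    ((continuous_const.mul (c2.pow 2)).mul c1)).sub
    ((continuous_const.mul c2).mul (c1.pow 3))).add (continuous_const.mul (c1.pow 5)))

theorem continuous_pp (c : ℝ) (k : ℕ) : Continuous (pp c k) :=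
  continuous_const.add (continuous_const.mul (continuous_id.sub continuous_const))

theorem Nice.continuous_FF5 (hN : Nice M δ C α c) : Continuous (FF M c 5) := by
  apply continuous_tsum
    (fun k => continuous_const.mul (hN.continuous_gd5.comp (continuous_pp c k)))
    ((summable_geometric_of_lt_one (by norm_num : (0:ℝ) ≤ 1/2)
      (by norm_num : (1/2:ℝ) < 1)).mul_left (KK C))
  intro k y
  rw [Real.norm_eq_abs]
  exact hN.abs_term_le 5 (by norm_num) (by norm_num) k y

theorem Nice.contDiff_FF0 (hN : Nice M δ C α c) : ContDiff ℝ 5 (FF M c 0) := by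
  have h : ContDiff ℝ (5:ℕ) (FF M c 0) := by
    rw [contDiff_nat_iff_iteratedDeriv]
    constructor
    · intro m hm
      rw [hN.iteratedDeriv_FF m hm]
      rcases eq_or_lt_of_le hm with h5 | h5
      · rw [h5]; exact hN.continuous_FF5
      · exact (hN.differentiable_FF m (by omega)).continuous
    · intro m hm
      rw [hN.iteratedDeriv_FF m (by omega)]
      exact hN.differentiable_FF m (by omega)
  exact_mod_cast h

theorem Nice.FF0_c (hN : Nice M δ C α c) : FF M c 0 c = 0 := by
  have h : ∀ k : ℕ, co 0 k * gd M 0 (pp c k c) = 0 := fun k => by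
    rw [pp_c, hN.gd0_c, mul_zero]
  unfold FF
  rw [tsum_congr h]
  exact tsum_zero

theorem Nice.FF1_c (hN : Nice M δ C α c) : FF M c 1 c = 0 := by
  have h : ∀ k : ℕ, co 1 k * gd M 1 (pp c k c) = 0 := fun k => by
    rw [pp_c, hN.gd1_c, mul_zero]
  unfold FF
  rw [tsum_congr h]
  exact tsum_zero

theorem Nice.FF2_c (hN : Nice M δ C α c) : FF M c 2 c = 2 * iteratedDeriv 2 M c := by
  have h : ∀ k : ℕ, co 2 k * gd M 2 (pp c k c) = (2⁻¹:ℝ) ^ k * iteratedDeriv 2 M c := by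
    intro k
    rw [pp_c, hN.gd2_c, co_eq]
    norm_num
  unfold FF
  rw [tsum_congr h, tsum_mul_right,
    tsum_geometric_of_lt_one (by norm_num) (by norm_num : (2⁻¹:ℝ) < 1)]
  norm_num

theorem Nice.FF3_c (hN : Nice M δ C α c) : FF M c 3 c = (4/3) * iteratedDeriv 3 M c := by
  have h : ∀ k : ℕ, co 3 k * gd M 3 (pp c k c) = (4⁻¹:ℝ) ^ k * iteratedDeriv 3 M c := by
    intro k
    rw [pp_c, hN.gd3_c, co_eq]
    norm_num
  unfold FF
  rw [tsum_congr h, tsum_mul_right,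
    tsum_geometric_of_lt_one (by norm_num) (by norm_num : (4⁻¹:ℝ) < 1)]
  norm_num

end Stmt1

namespace Stmt1
variable {M : ℝ → ℝ} {δ C α c : ℝ}

set_option maxHeartbeats 1000000 in
theorem Nice.FF_bd (hN : Nice M δ C α c) (j : ℕ) (hj2 : 2 ≤ j) (hj5 : j ≤ 5) (z : ℝ) :
    (1 + |z - c|) ^ α * |FF M c j z| ≤ KK C * (1 - (2:ℝ) ^ α * (1/2))⁻¹ := by
  have hKK := KK_nonneg hN.hC
  set ρ : ℝ := (2:ℝ) ^ α * (1/2) with hρdef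
  have hρ0 : 0 < ρ := by
    have := Real.rpow_pos_of_pos (by norm_num : (0:ℝ) < 2) α
    positivity
  have hρ1 : ρ < 1 := by
    have h2 : (2:ℝ) ^ α < 2 := by
      calc (2:ℝ) ^ α < (2:ℝ) ^ (1:ℝ) :=
        Real.rpow_lt_rpow_of_exponent_lt one_lt_two hN.hα1
      _ = 2 := Real.rpow_one 2
    rw [hρdef]; linarith
  have hφ0 : (0:ℝ) ≤ (1 + |z - c|) ^ α := by positivity
  -- key termwise bound
  have key : ∀ k : ℕ, (1 + |z - c|) ^ α * |co j k * gd M j (pp c k z)| ≤ KK C * ρ ^ k := by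
    intro k
    have hppc : |z - c| = 2 ^ k * |pp c k z - c| := by
      rw [pp_sub, abs_mul,
        abs_of_pos (show (0:ℝ) < (2:ℝ) ^ (-(k:ℤ)) from zpow_pos two_pos _), ← mul_assoc,
        ← zpow_natCast (2:ℝ) k, ← zpow_add₀ (two_ne_zero)]
      simp
    have h2k : (1:ℝ) ≤ 2 ^ k := one_le_pow₀ one_le_two
    have h1 : 1 + |z - c| ≤ 2 ^ k * (1 + |pp c k z - c|) := by
      rw [hppc, mul_add, mul_one]
      linarith
    have h2 : (1 + |z - c|) ^ α ≤ ((2:ℝ) ^ α) ^ k * (1 + |pp c k z - c|) ^ α := by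
      calc (1 + |z - c|) ^ α ≤ ((2:ℝ) ^ k * (1 + |pp c k z - c|)) ^ α :=
        Real.rpow_le_rpow (by positivity) h1 hN.hα.le
      _ = ((2:ℝ) ^ k) ^ α * (1 + |pp c k z - c|) ^ α :=
        Real.mul_rpow (by positivity) (by positivity)
      _ = ((2:ℝ) ^ α) ^ k * (1 + |pp c k z - c|) ^ α := by
        rw [← Real.rpow_natCast (2:ℝ) k, ← Real.rpow_mul (by norm_num), mul_comm (k:ℝ) α,
          Real.rpow_mul (by norm_num), Real.rpow_natCast]
    have h3 : (1 + |pp c k z - c|) ^ α * |gd M j (pp c k z)| ≤ KK C :=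
      hN.gd_bd j (by omega) hj5 (pp c k z)
    have h4 : (0:ℝ) ≤ ((2:ℝ) ^ α) ^ k := by positivity
    have h5 : co j k ≤ (1/2:ℝ) ^ k := co_le j k hj2
    calc (1 + |z - c|) ^ α * |co j k * gd M j (pp c k z)|
        = co j k * ((1 + |z - c|) ^ α * |gd M j (pp c k z)|) := by
          rw [abs_mul, abs_of_pos (co_pos _ _)]; ring
    _ ≤ co j k * (((2:ℝ) ^ α) ^ k * ((1 + |pp c k z - c|) ^ α * |gd M j (pp c k z)|)) := by
          have := mul_le_mul_of_nonneg_right h2 (abs_nonneg (gd M j (pp c k z)))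
          have h6 : (0:ℝ) ≤ co j k := (co_pos _ _).le
          rw [mul_assoc] at this
          exact mul_le_mul_of_nonneg_left this h6
    _ ≤ (1/2:ℝ) ^ k * (((2:ℝ) ^ α) ^ k * KK C) := by
          apply mul_le_mul h5 _ _ (by positivity)
          · exact mul_le_mul_of_nonneg_left h3 h4
          · positivity
    _ = KK C * ρ ^ k := by rw [hρdef, mul_pow]; ring
  -- sum up
  have hsum := hN.summable_abs_term j (by omega) hj5 z
  have hgeo : Summable fun k : ℕ => KK C * ρ ^ k :=
    (summable_geometric_of_lt_one hρ0.le hρ1).mul_left _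
  have habs : |FF M c j z| ≤ ∑' k, |co j k * gd M j (pp c k z)| := by
    unfold FF
    simpa only [Real.norm_eq_abs] using
      norm_tsum_le_tsum_norm (f := fun k => co j k * gd M j (pp c k z))
        (by simpa only [Real.norm_eq_abs] using hsum)
  calc (1 + |z - c|) ^ α * |FF M c j z|
      ≤ (1 + |z - c|) ^ α * ∑' k, |co j k * gd M j (pp c k z)| :=
        mul_le_mul_of_nonneg_left habs hφ0
  _ = ∑' k, (1 + |z - c|) ^ α * |co j k * gd M j (pp c k z)| := by
        rw [tsum_mul_left]
  _ ≤ ∑' k, KK C * ρ ^ k := Summable.tsum_le_tsum key (hsum.mul_left _) hgeo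
  _ = KK C * (1 - ρ)⁻¹ := by
        rw [tsum_mul_left, tsum_geometric_of_lt_one hρ0.le hρ1]

set_option maxHeartbeats 1000000 in
theorem Nice.FF1_bd (hN : Nice M δ C α c) (z : ℝ) :
    |FF M c 1 z| ≤ KK C * ((1 - (2:ℝ) ^ (-α))⁻¹ + 2) := by
  have hKK := KK_nonneg hN.hC
  set d := |z - c| with hd
  have hd0 : 0 ≤ d := abs_nonneg _
  set ρ : ℝ := (2:ℝ) ^ (-α) with hρdef
  have hρ0 : 0 < ρ := Real.rpow_pos_of_pos (by norm_num) _
  have hρ1 : ρ < 1 := Real.rpow_lt_one_of_one_lt_of_neg one_lt_two (by linarith [hN.hα])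
  set N : ℕ := ⌈Real.logb 2 (max d 1)⌉₊ with hNdef
  have hmax0 : (0:ℝ) < max d 1 := by positivity
  have hdN : d ≤ 2 ^ N := by
    calc d ≤ max d 1 := le_max_left _ _
    _ = (2:ℝ) ^ Real.logb 2 (max d 1) := (Real.rpow_logb two_pos (by norm_num) hmax0).symm
    _ ≤ (2:ℝ) ^ ((N:ℝ)) := Real.rpow_le_rpow_of_exponent_le one_le_two
        (Nat.le_ceil _)
    _ = 2 ^ N := Real.rpow_natCast 2 N
  -- summability
  have hsum : Summable fun k => |co 1 k * gd M 1 (pp c k z)| :=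
    hN.summable_abs_term 1 (by norm_num) (by norm_num) z
  have habs : |FF M c 1 z| ≤ ∑' k, |co 1 k * gd M 1 (pp c k z)| := by
    unfold FF
    simpa only [Real.norm_eq_abs] using
      norm_tsum_le_tsum_norm (f := fun k => co 1 k * gd M 1 (pp c k z))
        (by simpa only [Real.norm_eq_abs] using hsum)
  have hsplit := (Summable.sum_add_tsum_nat_add (f := fun k => |co 1 k * gd M 1 (pp c k z)|) N hsum).symm
  -- tail bound
  have tailterm : ∀ i : ℕ, |co 1 (i + N) * gd M 1 (pp c (i + N) z)| ≤ KK C * (1/2:ℝ) ^ i := by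
    intro i
    rw [co_one, one_mul]
    calc |gd M 1 (pp c (i + N) z)| ≤ KK C * |pp c (i + N) z - c| := hN.gd1_lip _
    _ = KK C * ((2:ℝ) ^ (-((i + N : ℕ):ℤ)) * d) := by
        rw [pp_sub, abs_mul, abs_of_pos (zpow_pos two_pos _), hd]
    _ ≤ KK C * ((2:ℝ) ^ (-((i + N : ℕ):ℤ)) * 2 ^ N) := by
        have h1 : (0:ℝ) < (2:ℝ) ^ (-((i + N : ℕ):ℤ)) := zpow_pos two_pos _
        apply mul_le_mul_of_nonneg_left _ hKK
        exact mul_le_mul_of_nonneg_left hdN h1.le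
    _ = KK C * (1/2:ℝ) ^ i := by
        congr 1
        rw [← zpow_natCast (2:ℝ) N, ← zpow_add₀ (two_ne_zero), ← two_zpow_neg_eq]
        congr 1
        push_cast
        ring
  have tails : Summable fun i => |co 1 (i + N) * gd M 1 (pp c (i + N) z)| :=
    (summable_nat_add_iff N).mpr hsum
  have tailbd : (∑' i, |co 1 (i + N) * gd M 1 (pp c (i + N) z)|) ≤ KK C * 2 := by
    calc (∑' i, |co 1 (i + N) * gd M 1 (pp c (i + N) z)|)
        ≤ ∑' i : ℕ, KK C * (1/2:ℝ) ^ i := Summable.tsum_le_tsum tailterm tails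
          ((summable_geometric_of_lt_one (by norm_num) (by norm_num)).mul_left _)
    _ = KK C * 2 := by
        rw [tsum_mul_left, tsum_geometric_of_lt_one (by norm_num) (by norm_num : (1/2:ℝ) < 1)]
        norm_num
  -- head bound
  have headterm : ∀ k, k < N → |co 1 k * gd M 1 (pp c k z)| ≤ KK C * ρ ^ (N - 1 - k) := by
    intro k hk
    have hN0 : N ≠ 0 := by omega
    have hd1 : 1 < d := by
      by_contra hle
      push_neg at hle
      have : max d 1 = 1 := max_eq_right hle
      have : N = 0 := by
        rw [hNdef, this]
        simp
      exact hN0 this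
    have hmaxd : max d 1 = d := max_eq_left hd1.le
    have hceil : (N:ℝ) < Real.logb 2 d + 1 := by
      have h0 : 0 ≤ Real.logb 2 (max d 1) := Real.logb_nonneg one_lt_two (le_max_right d 1)
      have hc : (N:ℝ) < Real.logb 2 (max d 1) + 1 := by
        rw [hNdef]
        exact_mod_cast Nat.ceil_lt_add_one h0
      rw [hmaxd] at hc
      exact hc
    have hlow : (2:ℝ) ^ ((N:ℝ) - 1) ≤ d := by
      calc (2:ℝ) ^ ((N:ℝ) - 1) ≤ (2:ℝ) ^ Real.logb 2 d :=
        Real.rpow_le_rpow_of_exponent_le one_le_two (by linarith)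
      _ = d := Real.rpow_logb two_pos (by norm_num) (by linarith)
    -- |pp - c| ≥ 2^(N-1-k)
    have hpp : (2:ℝ) ^ (((N:ℝ) - 1 - k)) ≤ |pp c k z - c| := by
      rw [pp_sub, abs_mul, abs_of_pos (zpow_pos two_pos _), ← hd]
      have h1 : (2:ℝ) ^ (-(k:ℤ)) = (2:ℝ) ^ (-(k:ℝ)) := by
        rw [← Real.rpow_intCast]
        push_cast
        rfl
      calc (2:ℝ) ^ ((N:ℝ) - 1 - k) = (2:ℝ) ^ (-(k:ℝ)) * (2:ℝ) ^ ((N:ℝ) - 1) := by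
            rw [← Real.rpow_add (by norm_num)]
            ring_nf
      _ ≤ (2:ℝ) ^ (-(k:ℝ)) * d := by
            apply mul_le_mul_of_nonneg_left hlow (by positivity)
      _ = (2:ℝ) ^ (-(k:ℤ)) * d := by rw [h1]
    have hpp0 : (0:ℝ) < (2:ℝ) ^ (((N:ℝ) - 1 - k)) := Real.rpow_pos_of_pos two_pos _
    -- bound via weighted estimate
    have hb := hN.gd_bd 1 (by norm_num) (by norm_num) (pp c k z)
    have hφpp : (1:ℝ) ≤ (1 + |pp c k z - c|) ^ α := hN.phi_one_le _ _
    have hφpos : (0:ℝ) < (1 + |pp c k z - c|) ^ α := by linarith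
    have h1 : |gd M 1 (pp c k z)| ≤ KK C / (1 + |pp c k z - c|) ^ α := by
      rw [le_div_iff₀ hφpos]
      calc |gd M 1 (pp c k z)| * (1 + |pp c k z - c|) ^ α
          = (1 + |pp c k z - c|) ^ α * |gd M 1 (pp c k z)| := mul_comm _ _
      _ ≤ KK C := hb
    have h2 : ((2:ℝ) ^ ((N:ℝ) - 1 - k)) ^ α ≤ (1 + |pp c k z - c|) ^ α :=
      Real.rpow_le_rpow hpp0.le (by linarith [abs_nonneg (pp c k z - c)]) hN.hα.le
    have h3 : KK C / (1 + |pp c k z - c|) ^ α ≤ KK C / ((2:ℝ) ^ ((N:ℝ) - 1 - k)) ^ α := by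
      apply div_le_div_of_nonneg_left hKK (by positivity) h2
    have hcast : ((N - 1 - k : ℕ) : ℝ) = (N:ℝ) - 1 - k := by
      have ha : 1 ≤ N := by omega
      have hb : k ≤ N - 1 := by omega
      push_cast [Nat.cast_sub hb, Nat.cast_sub ha]
      ring
    have h4 : KK C / ((2:ℝ) ^ ((N:ℝ) - 1 - k)) ^ α = KK C * ρ ^ (N - 1 - k) := by
      have e1 : ((2:ℝ) ^ ((N:ℝ) - 1 - k)) ^ α = (2:ℝ) ^ (((N:ℝ) - 1 - k) * α) :=
        (Real.rpow_mul (by norm_num) _ _).symm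
      have e2 : (ρ : ℝ) ^ (N - 1 - k) = (2:ℝ) ^ (-(((N:ℝ) - 1 - k) * α)) := by
        rw [← Real.rpow_natCast ρ (N - 1 - k), hρdef, ← Real.rpow_mul (by norm_num), hcast]
        congr 1
        ring
      rw [e1, e2, div_eq_mul_inv, ← Real.rpow_neg (by norm_num)]
    rw [co_one, one_mul]
    calc |gd M 1 (pp c k z)| ≤ KK C / (1 + |pp c k z - c|) ^ α := h1
    _ ≤ KK C / ((2:ℝ) ^ ((N:ℝ) - 1 - k)) ^ α := h3
    _ = KK C * ρ ^ (N - 1 - k) := h4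
  have headbd : (∑ k ∈ Finset.range N, |co 1 k * gd M 1 (pp c k z)|)
      ≤ KK C * (1 - ρ)⁻¹ := by
    have hgeo : Summable fun k : ℕ => KK C * ρ ^ k :=
      (summable_geometric_of_lt_one hρ0.le hρ1).mul_left _
    calc (∑ k ∈ Finset.range N, |co 1 k * gd M 1 (pp c k z)|)
        ≤ ∑ k ∈ Finset.range N, KK C * ρ ^ (N - 1 - k) :=
          Finset.sum_le_sum (fun k hk => headterm k (Finset.mem_range.mp hk))
    _ = ∑ k ∈ Finset.range N, KK C * ρ ^ k :=
          Finset.sum_range_reflect (fun k => KK C * ρ ^ k) N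
    _ ≤ ∑' k : ℕ, KK C * ρ ^ k :=
          Summable.sum_le_tsum (Finset.range N) (fun i _ => by positivity) hgeo
    _ = KK C * (1 - ρ)⁻¹ := by
          rw [tsum_mul_left, tsum_geometric_of_lt_one hρ0.le hρ1]
  calc |FF M c 1 z| ≤ ∑' k, |co 1 k * gd M 1 (pp c k z)| := habs
  _ = (∑ k ∈ Finset.range N, |co 1 k * gd M 1 (pp c k z)|)
      + ∑' i, |co 1 (i + N) * gd M 1 (pp c (i + N) z)| := hsplit
  _ ≤ KK C * (1 - ρ)⁻¹ + KK C * 2 := add_le_add headbd tailbd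
  _ = KK C * ((1 - ρ)⁻¹ + 2) := by ring

end Stmt1

namespace Stmt1

theorem hasDerivAt_Mf (m zs : ℝ → ℝ) (hm : ContDiff ℝ 5 m) (t z : ℝ) :
    HasDerivAt (Mf m zs t) (deriv m z - deriv m (zs t)) z := by
  have h1 : HasDerivAt m (deriv m z) z :=
    ((hm.differentiable (by norm_num)) z).hasDerivAt
  have h := ((h1.const_add 1).sub_const (m (zs t))).sub
    (((hasDerivAt_id z).sub_const (zs t)).const_mul (deriv m (zs t)))
  unfold Mf
  exact h.congr_deriv (by ring)

theorem deriv_Mf (m zs : ℝ → ℝ) (hm : ContDiff ℝ 5 m) (t : ℝ) :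
    deriv (Mf m zs t) = fun z => deriv m z - deriv m (zs t) :=
  funext fun z => (hasDerivAt_Mf m zs hm t z).deriv

theorem iter2_Mf (m zs : ℝ → ℝ) (hm : ContDiff ℝ 5 m) (t : ℝ) :
    iteratedDeriv 2 (Mf m zs t) = iteratedDeriv 2 m := by
  funext z
  rw [iteratedDeriv_succ, iteratedDeriv_one, deriv_Mf m zs hm t]
  rw [show iteratedDeriv 2 m z = deriv (deriv m) z by
    rw [iteratedDeriv_succ, iteratedDeriv_one]]
  exact deriv_sub_const _

theorem iter3_Mf (m zs : ℝ → ℝ) (hm : ContDiff ℝ 5 m) (t : ℝ) :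
    iteratedDeriv 3 (Mf m zs t) = iteratedDeriv 3 m := by
  funext z
  rw [iteratedDeriv_succ, iter2_Mf m zs hm t]
  rw [show iteratedDeriv 3 m z = deriv (iteratedDeriv 2 m) z from by rw [iteratedDeriv_succ]]

theorem contDiff_Mf (m zs : ℝ → ℝ) (hm : ContDiff ℝ 5 m) (t : ℝ) :
    ContDiff ℝ 5 (Mf m zs t) := by
  unfold Mf
  exact ((contDiff_const.add hm).sub contDiff_const).sub
    (contDiff_const.mul (contDiff_id.sub contDiff_const))

theorem Vstar_eq_FF (m zs : ℝ → ℝ) (t : ℝ) :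
    Vstar m zs t = FF (Mf m zs t) (zs t) 0 := by
  funext z
  unfold Vstar FF
  apply tsum_congr
  intro k
  rw [co_zero]
  rfl

end Stmt1


open Stmt1 in
set_option maxHeartbeats 1000000 in
theorem statement_1 (m zs : ℝ → ℝ) (α a : ℝ) (hA : AssumptionA m zs α a) :
    MemEstar zs α (Vstar m zs) ∧
    (∀ t : ℝ, 0 ≤ t → dz 2 (Vstar m zs) t (zs t) = 2 * iteratedDeriv 2 m (zs t)) ∧
    (∀ t : ℝ, 0 ≤ t → dz 3 (Vstar m zs) t (zs t) = (4 / 3) * iteratedDeriv 3 m (zs t)) := by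
  obtain ⟨δ, hδ, hδM⟩ := hA.Mpos
  obtain ⟨C1, hC1⟩ := hA.Mdecay 1 (by norm_num) (by norm_num)
  obtain ⟨C2, hC2⟩ := hA.Mdecay 2 (by norm_num) (by norm_num)
  obtain ⟨C3, hC3⟩ := hA.Mdecay 3 (by norm_num) (by norm_num)
  obtain ⟨C4, hC4⟩ := hA.Mdecay 4 (by norm_num) (by norm_num)
  obtain ⟨C5, hC5⟩ := hA.Mdecay 5 (by norm_num) (by norm_num)
  set C : ℝ := max 0 (max C1 (max C2 (max C3 (max C4 C5)))) with hCdef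
  have hC0 : 0 ≤ C := le_max_left _ _
  have hα1 : α < 1 := by
    have hl2 : 0 < Real.log 2 := Real.log_pos (by norm_num)
    have hl23 : Real.log 2 < Real.log 3 := Real.log_lt_log (by norm_num) (by norm_num)
    have : 1 < Real.log 3 / Real.log 2 := (one_lt_div hl2).mpr hl23
    linarith [hA.alpha_lt]
  have hNice : ∀ t : ℝ, 0 ≤ t → Nice (Mf m zs t) δ C α (zs t) := by
    intro t ht
    refine ⟨hδ, hA.alpha_pos, hα1, fun z => hδM t z ht, contDiff_Mf m zs hA.msmooth t, ?_, ?_,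
      hC0, ?_⟩
    · unfold Mf; ring
    · rw [(hasDerivAt_Mf m zs hA.msmooth t (zs t)).deriv]; ring
    · intro j hj1 hj5 z
      have key : ∀ Cj : ℝ, Cj ≤ C →
          phi zs α t z * |dz j (Mf m zs) t z| ≤ Cj * Mf m zs t z →
          (1 + |z - zs t|) ^ α * |iteratedDeriv j (Mf m zs t) z| ≤ C * Mf m zs t z := by
        intro Cj hCj h
        refine le_trans h (mul_le_mul_of_nonneg_right hCj ?_)
        linarith [hδM t z ht, hδ]
      interval_cases j
      · exact key C1 ((le_max_left _ _).trans (le_max_right _ _)) (hC1 t z ht)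
      · exact key C2 (((le_max_left _ _).trans (le_max_right _ _)).trans (le_max_right _ _))
          (hC2 t z ht)
      · exact key C3 ((((le_max_left _ _).trans (le_max_right _ _)).trans
          (le_max_right _ _)).trans (le_max_right _ _)) (hC3 t z ht)
      · exact key C4 (((((le_max_left _ _).trans (le_max_right _ _)).trans
          (le_max_right _ _)).trans (le_max_right _ _)).trans (le_max_right _ _)) (hC4 t z ht)
      · exact key C5 (((((le_max_right _ _).trans (le_max_right _ _)).trans
          (le_max_right _ _)).trans (le_max_right _ _)).trans (le_max_right _ _)) (hC5 t z ht)
  -- identification of the iterated derivatives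
  have hdz : ∀ t : ℝ, 0 ≤ t → ∀ j : ℕ, j ≤ 5 → ∀ z : ℝ,
      dz j (Vstar m zs) t z = FF (Mf m zs t) (zs t) j z := by
    intro t ht j hj z
    show iteratedDeriv j (Vstar m zs t) z = _
    rw [Vstar_eq_FF m zs t, (hNice t ht).iteratedDeriv_FF j hj]
  set B : ℝ := max (KK C * ((1 - (2:ℝ) ^ (-α))⁻¹ + 2)) (KK C * (1 - (2:ℝ) ^ α * (1/2))⁻¹)
    with hBdef
  have memE : MemE zs α (Vstar m zs) := by
    refine ⟨?_, ?_, ?_, ⟨B, ?_⟩⟩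
    · intro t ht
      rw [show (Vstar m zs) t = Vstar m zs t from rfl, Vstar_eq_FF m zs t]
      exact (hNice t ht).contDiff_FF0.of_le (by norm_num)
    · intro t ht
      rw [show (Vstar m zs) t = Vstar m zs t from rfl, Vstar_eq_FF m zs t]
      exact (hNice t ht).FF0_c
    · intro t ht
      rw [hdz t ht 1 (by norm_num)]
      exact (hNice t ht).FF1_c
    · intro t z ht
      refine ⟨?_, ?_, ?_⟩
      · rw [hdz t ht 1 (by norm_num)]
        exact ((hNice t ht).FF1_bd z).trans (le_max_left _ _)
      · rw [hdz t ht 2 (by norm_num)]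
        exact ((hNice t ht).FF_bd 2 (by norm_num) (by norm_num) z).trans (le_max_right _ _)
      · rw [hdz t ht 3 (by norm_num)]
        exact ((hNice t ht).FF_bd 3 (by norm_num) (by norm_num) z).trans (le_max_right _ _)
  refine ⟨⟨memE, ?_, ⟨B, ?_⟩⟩, ?_, ?_⟩
  · intro t ht
    rw [show (Vstar m zs) t = Vstar m zs t from rfl, Vstar_eq_FF m zs t]
    exact (hNice t ht).contDiff_FF0
  · intro t z ht
    constructor
    · rw [hdz t ht 4 (by norm_num)]
      exact ((hNice t ht).FF_bd 4 (by norm_num) (by norm_num) z).trans (le_max_right _ _)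
    · rw [hdz t ht 5 (by norm_num)]
      exact ((hNice t ht).FF_bd 5 (by norm_num) (by norm_num) z).trans (le_max_right _ _)
  · intro t ht
    rw [hdz t ht 2 (by norm_num), (hNice t ht).FF2_c, iter2_Mf m zs hA.msmooth t]
  · intro t ht
    rw [hdz t ht 3 (by norm_num), (hNice t ht).FF3_c, iter3_Mf m zs hA.msmooth t]
end
end
end

section
/- Let α ∈ (0,1), let j ≥ 1 be an integer, and let W : [0,∞)×ℝ → ℝ be j times differentiable in z with A := sup_{t,z} φ_α(t,z) |∂_z^j W(t,z)| < ∞. Then there is a constant C (independent of W, j, α) such that for every 0 < ε ≤ 1/4, every t ≥ 0, z ∈ ℝ and y ∈ ℝ: if |y| ≤ |z − z*(t)| then φ_α(t,z) |∂_z^j W(t, z̄(t) + εy)| ≤ C·A, and if |y| ≥ |z − z*(t)| then φ_α(t,z) |∂_z^j W(t, z̄(t) + εy)| ≤ (1 + |y|^α)·A. -/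
open MeasureTheory Filter

noncomputable section

lemma one_add_rpow_le (x α : ℝ) (hx : 0 ≤ x) (h0 : 0 ≤ α) (h1 : α ≤ 1) :
    (1 + x) ^ α ≤ 1 + x ^ α := by
  have := NNReal.rpow_add_le_add_rpow 1 x.toNNReal h0 h1
  have h := NNReal.coe_le_coe.2 this
  push_cast [NNReal.coe_rpow, Real.coe_toNNReal x hx] at h
  simpa using h

theorem statement_6 :
    ∃ C : ℝ, ∀ α : ℝ, 0 < α → α < 1 → ∀ j : ℕ, 1 ≤ j →
      ∀ (zs : ℝ → ℝ) (W : ℝ → ℝ → ℝ) (A : ℝ),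
        (∀ t z : ℝ, 0 ≤ t → phi zs α t z * |dz j W t z| ≤ A) →
        ∀ ε : ℝ, 0 < ε → ε ≤ 1 / 4 → ∀ t : ℝ, 0 ≤ t → ∀ z y : ℝ,
          (|y| ≤ |z - zs t| →
            phi zs α t z * |dz j W t (zbar zs t z + ε * y)| ≤ C * A) ∧
          (|z - zs t| ≤ |y| →
            phi zs α t z * |dz j W t (zbar zs t z + ε * y)| ≤ (1 + |y| ^ α) * A) := by
  refine ⟨4, fun α hα0 hα1 j hj zs W A hA ε hε0 hε14 t ht z y => ?_⟩
  set u : ℝ := z - zs t with hu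
  set w : ℝ := zbar zs t z + ε * y with hw
  have hwz : w - zs t = u / 2 + ε * y := by
    simp only [hw, hu, zbar]; ring
  -- the key hypothesis at the shifted point
  have hkey : (1 + |w - zs t|) ^ α * |dz j W t w| ≤ A := hA t w ht
  have hDnn : (0 : ℝ) ≤ |dz j W t w| := abs_nonneg _
  have hb1 : (1 : ℝ) ≤ 1 + |w - zs t| := by
    have := abs_nonneg (w - zs t); linarith
  have hb0 : (0 : ℝ) < 1 + |w - zs t| := by linarith
  have hpow1 : (1 : ℝ) ≤ (1 + |w - zs t|) ^ α :=
    Real.one_le_rpow hb1 hα0.le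
  have hA0 : 0 ≤ A := le_trans (by positivity) hkey
  have hDleA : |dz j W t w| ≤ A := by
    calc |dz j W t w| = 1 * |dz j W t w| := (one_mul _).symm
      _ ≤ (1 + |w - zs t|) ^ α * |dz j W t w| :=
          mul_le_mul_of_nonneg_right hpow1 hDnn
      _ ≤ A := hkey
  constructor
  · -- case |y| ≤ |u|
    intro hyu
    have hlow : |u| / 4 ≤ |w - zs t| := by
      rw [hwz]
      have h1 : |u / 2 + ε * y| ≥ |u / 2| - |ε * y| := by
        have := abs_sub_abs_le_abs_sub (u / 2) (-(ε * y))
        simp only [sub_neg_eq_add, abs_neg] at this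
        linarith [this]
      have h2 : |ε * y| ≤ |u| / 4 := by
        rw [abs_mul, abs_of_pos hε0]
        calc ε * |y| ≤ (1 / 4) * |u| := by
              apply mul_le_mul hε14 hyu (abs_nonneg _) (by norm_num)
          _ = |u| / 4 := by ring
      have h3 : |u / 2| = |u| / 2 := by rw [abs_div]; norm_num
      linarith
    have hphile : (1 + |u|) ^ α ≤ 4 * (1 + |w - zs t|) ^ α := by
      have h4 : (1 + |u|) ≤ 4 * (1 + |w - zs t|) := by linarith
      calc (1 + |u|) ^ α ≤ (4 * (1 + |w - zs t|)) ^ α := by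
            apply Real.rpow_le_rpow (by positivity) h4 hα0.le
        _ = 4 ^ α * (1 + |w - zs t|) ^ α :=
            Real.mul_rpow (by norm_num) (by linarith)
        _ ≤ 4 * (1 + |w - zs t|) ^ α := by
            apply mul_le_mul_of_nonneg_right _ (by positivity)
            calc (4 : ℝ) ^ α ≤ (4 : ℝ) ^ (1 : ℝ) :=
                  Real.rpow_le_rpow_of_exponent_le (by norm_num) hα1.le
              _ = 4 := Real.rpow_one 4
    calc phi zs α t z * |dz j W t w|
        = (1 + |u|) ^ α * |dz j W t w| := by rw [phi, hu]
      _ ≤ (4 * (1 + |w - zs t|) ^ α) * |dz j W t w| :=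
          mul_le_mul_of_nonneg_right hphile hDnn
      _ = 4 * ((1 + |w - zs t|) ^ α * |dz j W t w|) := by ring
      _ ≤ 4 * A := by linarith
  · -- case |u| ≤ |y|
    intro huy
    have h1 : (1 + |u|) ^ α ≤ 1 + |y| ^ α := by
      calc (1 + |u|) ^ α ≤ (1 + |y|) ^ α :=
            Real.rpow_le_rpow (by positivity) (by linarith) hα0.le
        _ ≤ 1 + |y| ^ α := one_add_rpow_le _ _ (abs_nonneg _) hα0.le hα1.le
    calc phi zs α t z * |dz j W t w|
        = (1 + |u|) ^ α * |dz j W t w| := by rw [phi, hu]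
      _ ≤ (1 + |y| ^ α) * A := by
          apply mul_le_mul h1 hDleA hDnn
          positivity
end
end
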